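/- arXiv:1401.1745 — 5 statements merged into one kernel-verified Lean document; each statement's English description precedes it below -/
import Mathlib

section
/- Let X be a finite simple graph that belongs to a symmetric association scheme {A_0, A_1, …, A_d}. If X admits perfect state transfer from a vertex u to a vertex v at time τ, then there exist λ ∈ ℂ with |λ| = 1 and an index m ∈ {1, …, d} such that U(τ) = λ·A_m, and A_m is a permutation matrix of order two with no fixed points (i.e., A_m is a symmetric 0–1 permutation matrix with zero diagonal, so A_m² = I). -/
/-!
The transition matrix `exp(iτA)` lies in the Bose–Mesner algebra, so `U(τ) = ∑ cᵢ Aᵢ` is constant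
on every class. Perfect state transfer makes column `u` of `U(τ)` vanish off `v`; as every class
is regular, each nonzero class other than the class `m` of `(v, u)` meets column `u` off `v`, so
`U(τ) = c_m A_m`. Unitarity then gives `|c_m| = 1` and `A_m² = I`, and the diagonal of `A_m²` is
the valency of `A_m`, which is therefore one.
-/

open Matrix

/-- The transition matrix `U(t) = exp(itA)` of the continuous-time quantum walk on `G`. -/
noncomputable def transitionMatrix {V : Type*} [Fintype V] [DecidableEq V]
    (G : SimpleGraph V) (t : ℝ) : Matrix V V ℂ :=
  letI := Classical.decRel G.Adj
  NormedSpace.exp ((Complex.I * (t : ℂ)) • G.adjMatrix ℂ)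

/-- `G` admits perfect state transfer from `u` to `v` at time `t`. -/
def HasPST {V : Type*} [Fintype V] [DecidableEq V]
    (G : SimpleGraph V) (u v : V) (t : ℝ) : Prop :=
  u ≠ v ∧ ∃ μ : ℂ, transitionMatrix G t *ᵥ (Pi.single u 1 : V → ℂ)
      = μ • (Pi.single v 1 : V → ℂ)

/-- A symmetric association scheme with `d` classes. -/
structure IsAssocScheme {V : Type*} [Fintype V] [DecidableEq V] {d : ℕ}
    (A : Fin (d+1) → Matrix V V ℝ) : Prop where
  entries : ∀ i u v, A i u v = 0 ∨ A i u v = 1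
  ident : A 0 = 1
  symm : ∀ i, (A i).IsSymm
  total : ∑ i, A i = Matrix.of fun _ _ => 1
  inter : ∀ i j, ∃ p : Fin (d+1) → ℕ, A i * A j = ∑ k, (p k : ℝ) • A k

/-- `T` is a symmetric 0-1 permutation matrix of order two with no fixed points. -/
def IsPermOrderTwoNoFixed {V : Type*} [Fintype V] [DecidableEq V] (T : Matrix V V ℝ) : Prop :=
  (∀ u v, T u v = 0 ∨ T u v = 1) ∧ T.IsSymm ∧ (∀ u, T u u = 0) ∧
  T * T = 1 ∧ (∀ u, ∃! v, T u v = 1)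

section ZeroOne

variable {ι : Type*} [Fintype ι] {f : ι → ℝ}

theorem exists_eq_one_of_sum_ne_zero (hf : ∀ i, f i = 0 ∨ f i = 1) (hsum : ∑ i, f i ≠ 0) :
    ∃ i, f i = 1 := by
  obtain ⟨i, -, hi⟩ := Finset.exists_ne_zero_of_sum_ne_zero hsum
  exact ⟨i, (hf i).resolve_left hi⟩

theorem existsUnique_eq_one_of_sum_eq_one (hf : ∀ i, f i = 0 ∨ f i = 1) (hsum : ∑ i, f i = 1) :
    ∃! i, f i = 1 := by
  obtain ⟨i, hi⟩ := exists_eq_one_of_sum_ne_zero hf (hsum ▸ one_ne_zero)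
  refine ⟨i, hi, fun j hj => by_contra fun hji => ?_⟩
  have : f j + f i ≤ ∑ k, f k :=
    Finset.add_le_sum (fun k _ => by rcases hf k with h | h <;> simp [h])
      (Finset.mem_univ j) (Finset.mem_univ i) hji
  linarith

end ZeroOne

theorem Matrix.exp_mem_span {V : Type*} [Fintype V] [DecidableEq V] {s : Set (Matrix V V ℂ)}
    (h_one : 1 ∈ Submodule.span ℂ s) (h_mul : ∀ a ∈ s, ∀ b ∈ s, a * b ∈ Submodule.span ℂ s)
    {x : Matrix V V ℂ} (hx : x ∈ Submodule.span ℂ s) :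
    NormedSpace.exp x ∈ Submodule.span ℂ s := by
  have h_mul' : ∀ a b, a ∈ Submodule.span ℂ s → b ∈ Submodule.span ℂ s →
      a * b ∈ Submodule.span ℂ s := by
    intro a b ha hb
    have := Submodule.mul_mem_mul ha hb
    rw [Submodule.span_mul_span] at this
    exact Submodule.span_le.mpr (Set.mul_subset_iff.mpr h_mul) this
  exact NormedSpace.exp_mem (s := (Submodule.span ℂ s).toSubalgebra h_one h_mul')
    (Submodule.closed_of_finiteDimensional _) hx

namespace IsAssocScheme

variable {V : Type*} [Fintype V] [DecidableEq V] {d : ℕ} {A : Fin (d+1) → Matrix V V ℝ}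

theorem apply_nonneg (hA : IsAssocScheme A) (i : Fin (d+1)) (w x : V) : 0 ≤ A i w x := by
  rcases hA.entries i w x with h | h <;> simp [h]

theorem existsUnique_apply_eq_one (hA : IsAssocScheme A) (w x : V) : ∃! i, A i w x = 1 :=
  existsUnique_eq_one_of_sum_eq_one (fun i => hA.entries i w x) <| by
    simpa [Matrix.sum_apply] using congrFun (congrFun hA.total w) x

theorem apply_eq_zero_of_apply_eq_one (hA : IsAssocScheme A) {i j : Fin (d+1)} {w x : V}
    (hi : A i w x = 1) (hji : j ≠ i) : A j w x = 0 :=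
  (hA.entries j w x).resolve_right fun hj => hji ((hA.existsUnique_apply_eq_one w x).unique hj hi)

theorem apply_self_eq_zero (hA : IsAssocScheme A) {i : Fin (d+1)} (hi : i ≠ 0) (z : V) :
    A i z z = 0 :=
  hA.apply_eq_zero_of_apply_eq_one (by simp [hA.ident]) hi

theorem mul_self_apply_self (hA : IsAssocScheme A) (i : Fin (d+1)) (z : V) :
    (A i * A i) z z = ∑ w, A i z w := by
  refine Finset.sum_congr rfl fun w _ => ?_
  change A i z w * A i w z = A i z w
  rw [(hA.symm i).apply z w]
  rcases hA.entries i z w with h | h <;> simp [h]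

/-- The row sum of `A i` is the coefficient of `A 0` in `A i * A i`. -/
theorem sum_row_eq (hA : IsAssocScheme A) (i : Fin (d+1)) (z z' : V) :
    ∑ w, A i z w = ∑ w, A i z' w := by
  obtain ⟨p, hp⟩ := hA.inter i i
  have hdiag : ∀ y, (A i * A i) y y = p 0 := fun y => by
    rw [hp, Matrix.sum_apply,
      Finset.sum_eq_single 0 (fun k _ hk => by simp [hA.apply_self_eq_zero hk]) (by simp)]
    simp [hA.ident]
  rw [← hA.mul_self_apply_self, ← hA.mul_self_apply_self, hdiag, hdiag]

theorem exists_apply_eq_one_of_apply_eq_one (hA : IsAssocScheme A) {i : Fin (d+1)} {a b : V}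
    (hab : A i a b = 1) (z : V) : ∃ w, A i z w = 1 := by
  refine exists_eq_one_of_sum_ne_zero (hA.entries i z) (ne_of_gt ?_)
  calc (0 : ℝ) < A i a b := hab ▸ one_pos
    _ ≤ ∑ w, A i a w :=
      Finset.single_le_sum (fun w _ => hA.apply_nonneg i a w) (Finset.mem_univ b)
    _ = ∑ w, A i z w := hA.sum_row_eq i a z

end IsAssocScheme

theorem Matrix.IsSymm.isHermitian_map_ofReal {V : Type*} {M : Matrix V V ℝ} (h : M.IsSymm) :
    (M.map ((↑) : ℝ → ℂ)).IsHermitian :=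
  (isHermitian_iff_isSymm.mpr h).map _ fun x => by simp

theorem Matrix.map_ofReal_sum_smul {V ι : Type*} [Fintype ι] (c : ι → ℝ) (M : ι → Matrix V V ℝ) :
    (∑ i, c i • M i).map ((↑) : ℝ → ℂ) = ∑ i, (c i : ℂ) • (M i).map (↑) := by
  ext w x
  simp [Matrix.sum_apply]

theorem SimpleGraph.map_adjMatrix {V α β : Type*} (G : SimpleGraph V) [DecidableRel G.Adj]
    [Zero α] [One α] [Zero β] [One β] (f : α → β) (h0 : f 0 = 0) (h1 : f 1 = 1) :
    (G.adjMatrix α).map f = G.adjMatrix β := by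
  ext w x
  by_cases h : G.Adj w x <;> simp [h, h0, h1]

theorem Matrix.IsHermitian.exp_I_mul_smul_mem_unitaryGroup {V : Type*} [Fintype V]
    [DecidableEq V] {H : Matrix V V ℂ} (hH : H.IsHermitian) (t : ℝ) :
    NormedSpace.exp ((Complex.I * t) • H) ∈ unitaryGroup V ℂ := by
  have hstar : star ((Complex.I * t) • H) = -((Complex.I * t) • H) := by
    rw [star_eq_conjTranspose, conjTranspose_smul, hH.eq, ← neg_smul]
    simp
  rw [mem_unitaryGroup_iff, NormedSpace.star_exp, hstar,
    ← Matrix.exp_add_of_commute _ _ (Commute.refl ((Complex.I * t) • H)).neg_right,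
    add_neg_cancel, NormedSpace.exp_zero]

theorem Matrix.norm_apply_eq_one_of_mem_unitaryGroup {V : Type*} [Fintype V] [DecidableEq V]
    {U : Matrix V V ℂ} (hU : U ∈ unitaryGroup V ℂ) {u v : V} (hcol : ∀ w ≠ v, U w u = 0) :
    ‖U v u‖ = 1 := by
  have h := congrFun (congrFun (mem_unitaryGroup_iff'.mp hU) u) u
  rw [mul_apply, Finset.sum_eq_single v (fun w _ hw => by simp [hcol w hw]) (by simp)] at h
  simp only [star_apply, RCLike.star_def, Complex.conj_mul', one_apply_eq] at h
  norm_cast at h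
  exact (pow_eq_one_iff_of_nonneg (norm_nonneg _) two_ne_zero).mp h

theorem Matrix.mul_self_eq_one_of_smul_map_ofReal_mem_unitaryGroup {V : Type*} [Fintype V]
    [DecidableEq V] {M : Matrix V V ℝ} (hM : M.IsSymm) {lam : ℂ} (hlam : ‖lam‖ = 1)
    (hU : lam • M.map ((↑) : ℝ → ℂ) ∈ unitaryGroup V ℂ) : M * M = 1 := by
  rw [mem_unitaryGroup_iff, star_smul, star_eq_conjTranspose, hM.isHermitian_map_ofReal.eq,
    smul_mul_smul_comm, RCLike.star_def, Complex.mul_conj', hlam, Complex.ofReal_one, one_pow,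
    one_smul] at hU
  refine Matrix.map_injective Complex.ofReal_injective ?_
  change (M * M).map Complex.ofRealHom = (1 : Matrix V V ℝ).map Complex.ofRealHom
  rw [Matrix.map_mul, Matrix.map_one _ (map_zero _) (map_one _)]
  exact hU

theorem transitionMatrix_eq_exp {V : Type*} [Fintype V] [DecidableEq V] (G : SimpleGraph V)
    [DecidableRel G.Adj] (t : ℝ) :
    transitionMatrix G t = NormedSpace.exp ((Complex.I * t) • G.adjMatrix ℂ) := by
  unfold transitionMatrix
  congr!

theorem transitionMatrix_mem_unitaryGroup {V : Type*} [Fintype V] [DecidableEq V]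
    (G : SimpleGraph V) (t : ℝ) : transitionMatrix G t ∈ unitaryGroup V ℂ := by
  classical
  rw [transitionMatrix_eq_exp,
    ← G.map_adjMatrix ((↑) : ℝ → ℂ) Complex.ofReal_zero Complex.ofReal_one]
  exact G.isSymm_adjMatrix.isHermitian_map_ofReal.exp_I_mul_smul_mem_unitaryGroup t

theorem HasPST.transitionMatrix_apply_eq_zero {V : Type*} [Fintype V] [DecidableEq V]
    {G : SimpleGraph V} {u v : V} {t : ℝ} (h : HasPST G u v t) {w : V} (hw : w ≠ v) :
    transitionMatrix G t w u = 0 := by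
  obtain ⟨-, μ, hμ⟩ := h
  simpa [Matrix.mulVec_single, hw] using congrFun hμ w

/-- For an association scheme this span is the Bose–Mesner algebra. -/
def boseMesner {V : Type*} {d : ℕ} (A : Fin (d+1) → Matrix V V ℝ) : Submodule ℂ (Matrix V V ℂ) :=
  Submodule.span ℂ (Set.range fun i => (A i).map ((↑) : ℝ → ℂ))

namespace IsAssocScheme

variable {V : Type*} [Fintype V] [DecidableEq V] {d : ℕ} {A : Fin (d+1) → Matrix V V ℝ}

theorem exp_mem_boseMesner (hA : IsAssocScheme A) {x : Matrix V V ℂ} (hx : x ∈ boseMesner A) :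
    NormedSpace.exp x ∈ boseMesner A := by
  have h_one : (A 0).map ((↑) : ℝ → ℂ) = 1 := by
    rw [hA.ident]
    exact Matrix.map_one _ Complex.ofReal_zero Complex.ofReal_one
  have h1 : (1 : Matrix V V ℂ) ∈ boseMesner A := by
    rw [← h_one]
    exact Submodule.subset_span ⟨0, rfl⟩
  refine Matrix.exp_mem_span h1 ?_ hx
  rintro _ ⟨i, rfl⟩ _ ⟨j, rfl⟩
  obtain ⟨p, hp⟩ := hA.inter i j
  have hmul : (A i).map ((↑) : ℝ → ℂ) * (A j).map (↑) = (A i * A j).map ((↑) : ℝ → ℂ) :=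
    (Matrix.map_mul (f := Complex.ofRealHom) (L := A i) (M := A j)).symm
  rw [hmul, hp, Matrix.map_ofReal_sum_smul]
  exact Submodule.sum_mem _ fun k _ => Submodule.smul_mem _ _ (Submodule.subset_span ⟨k, rfl⟩)

theorem transitionMatrix_mem_boseMesner (hA : IsAssocScheme A) {G : SimpleGraph V}
    [DecidableRel G.Adj] (hG : ∃ c : Fin (d+1) → ℝ, G.adjMatrix ℝ = ∑ i, c i • A i) (t : ℝ) :
    transitionMatrix G t ∈ boseMesner A := by
  obtain ⟨c, hc⟩ := hG
  rw [transitionMatrix_eq_exp,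
    ← G.map_adjMatrix ((↑) : ℝ → ℂ) Complex.ofReal_zero Complex.ofReal_one, hc,
    Matrix.map_ofReal_sum_smul]
  exact hA.exp_mem_boseMesner <| Submodule.smul_mem _ _ <|
    Submodule.sum_mem _ fun i _ => Submodule.smul_mem _ _ (Submodule.subset_span ⟨i, rfl⟩)

theorem sum_smul_apply (hA : IsAssocScheme A) (c : Fin (d+1) → ℂ) {i : Fin (d+1)} {w x : V}
    (hi : A i w x = 1) : (∑ j, c j • (A j).map ((↑) : ℝ → ℂ)) w x = c i := by
  rw [Matrix.sum_apply, Finset.sum_eq_single i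
    (fun j _ hj => by simp [hA.apply_eq_zero_of_apply_eq_one hi hj]) (by simp)]
  simp [hi]

/-- Classes are regular, so every nonzero class meets column `u`, and each one other than the
class of `(v, u)` meets it off `v`. -/
theorem sum_smul_eq_smul_of_apply_eq_zero (hA : IsAssocScheme A) (c : Fin (d+1) → ℂ)
    {m : Fin (d+1)} {u v : V} (hm : A m v u = 1)
    (hcol : ∀ w ≠ v, (∑ j, c j • (A j).map ((↑) : ℝ → ℂ)) w u = 0) :
    ∑ j, c j • (A j).map ((↑) : ℝ → ℂ) = c m • (A m).map (↑) := by
  refine Finset.sum_eq_single m (fun i _ him => ?_) (by simp)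
  by_cases hi : ∃ w, A i u w = 1
  · obtain ⟨w, hw⟩ := hi
    have hwu : A i w u = 1 := ((hA.symm i).apply u w).trans hw
    have hwv : w ≠ v := by
      rintro rfl
      exact him ((hA.existsUnique_apply_eq_one w u).unique hwu hm)
    rw [← hA.sum_smul_apply c hwu, hcol w hwv, zero_smul]
  · have hAi : A i = 0 := by
      ext a b
      refine (hA.entries i a b).resolve_right fun hab => hi ?_
      exact hA.exists_apply_eq_one_of_apply_eq_one hab u
    simp [hAi]

theorem isPermOrderTwoNoFixed (hA : IsAssocScheme A) {m : Fin (d+1)} (hm : m ≠ 0)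
    (hsq : A m * A m = 1) : IsPermOrderTwoNoFixed (A m) := by
  refine ⟨hA.entries m, hA.symm m, hA.apply_self_eq_zero hm, hsq,
    fun z => existsUnique_eq_one_of_sum_eq_one (hA.entries m z) ?_⟩
  rw [← hA.mul_self_apply_self, hsq, one_apply_eq]

end IsAssocScheme

/-- If a graph `G` belonging to a symmetric association scheme
`{A 0, …, A d}` admits perfect state transfer from `u` to `v` at time `τ`, then
`U(τ) = λ • A m` for some unimodular `λ ∈ ℂ` and some class index `m ≠ 0`, and
`A m` is a permutation matrix of order two with no fixed points. -/
theorem stmt_0 {V : Type*} [Fintype V] [DecidableEq V] {d : ℕ}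
    (G : SimpleGraph V) [DecidableRel G.Adj]
    (A : Fin (d+1) → Matrix V V ℝ)
    (hScheme : IsAssocScheme A)
    (hMem : ∃ coeff : Fin (d+1) → ℝ, G.adjMatrix ℝ = ∑ i, coeff i • A i)
    (u v : V) (τ : ℝ)
    (hpst : HasPST G u v τ) :
    ∃ (lam : ℂ) (m : Fin (d+1)), ‖lam‖ = 1 ∧ m ≠ 0 ∧
      transitionMatrix G τ = lam • (A m).map (fun x : ℝ => (x : ℂ)) ∧
      IsPermOrderTwoNoFixed (A m) := by
  have hcol : ∀ w ≠ v, transitionMatrix G τ w u = 0 :=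
    fun _ => hpst.transitionMatrix_apply_eq_zero
  obtain ⟨c, hc⟩ := (Submodule.mem_span_range_iff_exists_fun ℂ).mp
    (hScheme.transitionMatrix_mem_boseMesner hMem τ)
  obtain ⟨m, hm, -⟩ := hScheme.existsUnique_apply_eq_one v u
  have hU : transitionMatrix G τ = c m • (A m).map (↑) := by
    rw [← hc]
    exact hScheme.sum_smul_eq_smul_of_apply_eq_zero c hm (hc ▸ hcol)
  have hm0 : m ≠ 0 := by
    rintro rfl
    simp [hScheme.ident, Matrix.one_apply_ne hpst.1.symm] at hm
  have hunit := transitionMatrix_mem_unitaryGroup G τ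
  have hlam : ‖c m‖ = 1 := by
    simpa [hU, hm] using Matrix.norm_apply_eq_one_of_mem_unitaryGroup hunit hcol
  have hsq : A m * A m = 1 :=
    Matrix.mul_self_eq_one_of_smul_map_ofReal_mem_unitaryGroup (hScheme.symm m) hlam (hU ▸ hunit)
  exact ⟨c m, m, hlam, hm0, hU, hScheme.isPermOrderTwoNoFixed hm0 hsq⟩
end

section
/- Let X be a distance-regular graph of diameter d that admits perfect state transfer from a vertex u to a vertex v at time τ. Then X is antipodal with fibres of size 2, i.e., every vertex of X has exactly one vertex at distance d from it; moreover dist(u, v) = d, the distance-d matrix A_d is a permutation matrix of order two with no fixed points, and U(τ) = λ·A_d for some λ ∈ ℂ with |λ| = 1. -/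
open Matrix

/-- `G` is a distance-regular graph of diameter `d` with intersection parameters `b`, `c`. -/
def IsDRG {V : Type*} [Fintype V] [DecidableEq V] (G : SimpleGraph V)
    (d : ℕ) (b c : ℕ → ℕ) : Prop :=
  G.Connected ∧ (∀ u v, G.dist u v ≤ d) ∧ (∃ u v, G.dist u v = d) ∧
  (∀ i, 1 ≤ i → i ≤ d → ∀ u v : V, G.dist u v = i →
      Nat.card {w : V // G.Adj v w ∧ G.dist u w = i - 1} = c i) ∧
  (∀ i, i ≤ d - 1 → ∀ u v : V, G.dist u v = i →
      Nat.card {w : V // G.Adj v w ∧ G.dist u w = i + 1} = b i)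

/-- The `i`-th distance matrix of a graph. -/
noncomputable def distMatrix {V : Type*} [Fintype V] [DecidableEq V] (G : SimpleGraph V)
    (i : ℕ) : Matrix V V ℝ :=
  Matrix.of fun u v => if G.dist u v = i then 1 else 0

/-!
Because the intersection numbers of a distance-regular graph are well defined, the entries of
`A ^ n`, and hence of `U(τ) = exp(iτA)`, depend only on the distance between the two vertices.
The `u`-th column of `U(τ)` is `λ e_v` and every distance occurs from `u`, so `U(τ) = λ A_j`
with `j = dist(u, v)`. Unitarity of `U(τ)` together with `A_j e_u = e_v` gives `|λ| = 1` and
`A_j ^ 2 = 1`, so `A_j` is the matrix of an involution `σ`. As `A_j` commutes with `A`, `σ` is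
a graph automorphism moving every vertex to distance `j ≠ 0`, and this forces `j = d`.
-/

open Finset

namespace SimpleGraph

variable {V : Type*} {G : SimpleGraph V}

theorem Walk.dist_getVert_getVert {u v : V} {p : G.Walk u v} (hp : p.length = G.dist u v)
    {a b : ℕ} (hab : a ≤ b) (hb : b ≤ p.length) :
    G.dist (p.getVert a) (p.getVert b) = b - a := by
  have hsub : ((p.take b).drop a).IsSubwalk p := (isSubwalk_drop _ a).trans (isSubwalk_take p b)
  have := length_eq_dist_of_subwalk hp hsub
  rwa [Walk.drop_length, Walk.take_length, Walk.take_getVert, min_eq_left hb,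
    min_eq_right hab, eq_comm] at this

theorem Hom.dist_map_le {W : Type*} {G' : SimpleGraph W} (f : G →g G') {x y : V}
    (h : G.Reachable x y) : G'.dist (f x) (f y) ≤ G.dist x y := by
  obtain ⟨p, hp⟩ := h.exists_walk_length_eq_dist
  exact hp ▸ p.length_map f ▸ dist_le (p.map f)

/-- On a diametral geodesic `x₀ … x_d` we get `f x₀ = x_j` and `f x_d = x_{d-j}`, which are
closer than `d`, although `f ∘ f = id` cannot decrease distances. -/
theorem Connected.eq_of_forall_dist_eq_iff (hG : G.Connected) (f : G →g G) {j d : ℕ}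
    (hj : j ≠ 0) (hf : ∀ w x, G.dist w x = j ↔ x = f w) (hle : ∀ x y, G.dist x y ≤ d)
    {p q : V} (hpq : G.dist p q = d) : j = d := by
  have hff : ∀ w, f (f w) = w := fun w =>
    ((hf (f w) w).1 (dist_comm.trans ((hf w (f w)).2 rfl))).symm
  have hjd : j ≤ d := (hf p (f p)).2 rfl ▸ hle p (f p)
  obtain ⟨W, hW⟩ := hG.exists_walk_length_eq_dist p q
  have hp : f p = W.getVert j := by
    refine ((hf _ _).1 ?_).symm
    simpa using W.dist_getVert_getVert hW (Nat.zero_le j) (by omega)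
  have hq : f q = W.getVert (d - j) := by
    have : G.dist (W.getVert (d - j)) q = j := by
      have := W.dist_getVert_getVert hW (a := d - j) (by omega) le_rfl
      rwa [Walk.getVert_length, hW, hpq, Nat.sub_sub_self hjd] at this
    rw [← hff (W.getVert (d - j))]
    exact congrArg f ((hf _ _).1 this)
  have hdf : d ≤ G.dist (f p) (f q) := by
    simpa [hff, hpq] using f.dist_map_le (hG.preconnected (f p) (f q))
  rw [hp, hq] at hdf
  rcases le_total j (d - j) with h | h
  · rw [W.dist_getVert_getVert hW h (by omega)] at hdf
    omega
  · rw [dist_comm, W.dist_getVert_getVert hW h (by omega)] at hdf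
    omega

variable [Fintype V] [DecidableRel G.Adj]

theorem natCard_adj_and_eq_card_filter_neighborFinset (w : V) (P : V → Prop) [DecidablePred P] :
    Nat.card {y // G.Adj w y ∧ P y} = #{y ∈ G.neighborFinset w | P y} := by
  rw [Nat.card_eq_fintype_card, Fintype.card_subtype, neighborFinset_eq_filter, filter_filter]

variable [DecidableEq V]

theorem adj_apply_iff_of_commute {R : Type*} [Semiring R] [Nontrivial R] (σ : Equiv.Perm V)
    (h : Commute (G.adjMatrix R) σ.toPEquiv.toMatrix) (x y : V) :
    G.Adj (σ x) (σ y) ↔ G.Adj x y := by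
  have := congrFun (congrFun h.eq x) (σ y)
  rw [PEquiv.mul_toMatrix_toPEquiv, PEquiv.toMatrix_toPEquiv_mul] at this
  simp only [submatrix_apply, id, Equiv.symm_apply_apply, adjMatrix_apply] at this
  split_ifs at this <;> simp_all

end SimpleGraph

section DistanceRegular

variable {V : Type*} [Fintype V] [DecidableEq V] {G : SimpleGraph V} {d : ℕ} {b c : ℕ → ℕ}

theorem IsDRG.connected (h : IsDRG G d b c) : G.Connected := h.1

theorem IsDRG.dist_le (h : IsDRG G d b c) (x y : V) : G.dist x y ≤ d := h.2.1 x y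

/-- `b i > 0` for `i < d`, as witnessed on a diametral geodesic. -/
theorem IsDRG.exists_dist_eq (h : IsDRG G d b c) (w : V) {i : ℕ} (hi : i ≤ d) :
    ∃ y, G.dist w y = i := by
  obtain ⟨hG, -, ⟨p, q, hpq⟩, -, hb⟩ := h
  induction i with
  | zero => exact ⟨w, SimpleGraph.dist_self⟩
  | succ i ih =>
    obtain ⟨y, hy⟩ := ih (by omega)
    obtain ⟨W, hW⟩ := hG.exists_walk_length_eq_dist p q
    have hpos : 0 < b i := by
      have hi : G.dist p (W.getVert i) = i := by
        simpa using W.dist_getVert_getVert hW (Nat.zero_le i) (by omega)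
      have hi1 : G.dist p (W.getVert (i + 1)) = i + 1 := by
        simpa using W.dist_getVert_getVert hW (Nat.zero_le (i + 1)) (by omega)
      rw [← hb i (by omega) p _ hi, Nat.card_pos_iff]
      exact ⟨⟨⟨_, W.adj_getVert_succ (by omega), hi1⟩⟩, inferInstance⟩
    rw [← hb i (by omega) w y hy, Nat.card_pos_iff] at hpos
    obtain ⟨⟨z, -, hz⟩⟩ := hpos.1
    exact ⟨z, hz⟩

variable [DecidableRel G.Adj]

theorem IsDRG.card_neighborFinset (h : IsDRG G d b c) (w : V) : #(G.neighborFinset w) = b 0 := by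
  obtain ⟨-, -, -, -, hb⟩ := h
  have hb := hb 0 (Nat.zero_le _) w w SimpleGraph.dist_self
  rwa [SimpleGraph.natCard_adj_and_eq_card_filter_neighborFinset, filter_true_of_mem] at hb
  intro y hy
  exact SimpleGraph.dist_eq_one_iff_adj.2 ((G.mem_neighborFinset w y).1 hy)

theorem IsDRG.card_filter_dist_eq_of_ne (h : IsDRG G d b c) {x w x' w' : V}
    (hxw : G.dist x w = G.dist x' w') {k : ℕ} (hk : k ≠ G.dist x w) :
    #{y ∈ G.neighborFinset w | G.dist x y = k} =
      #{y ∈ G.neighborFinset w' | G.dist x' y = k} := by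
  obtain ⟨-, hle, -, hc, hb⟩ := h
  simp only [← SimpleGraph.natCard_adj_and_eq_card_filter_neighborFinset]
  have hzero : ∀ x w : V, (∀ y, G.Adj w y → G.dist x y ≠ k) →
      Nat.card {y // G.Adj w y ∧ G.dist x y = k} = 0 := fun x w H =>
    Nat.card_eq_zero.2 (.inl ⟨fun ⟨y, hy, hk⟩ => H y hy hk⟩)
  have hi := hle x w
  by_cases hsucc : k = G.dist x w + 1
  · by_cases hid : G.dist x w ≤ d - 1
    · subst hsucc
      rw [hb _ hid x w rfl, hxw, hb _ (hxw ▸ hid) x' w' rfl]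
    · rw [hzero x w fun y _ => by have := hle x y; omega,
        hzero x' w' fun y _ => by have := hle x' y; omega]
  by_cases hpred : k + 1 = G.dist x w
  · have hk' : k = G.dist x w - 1 := by omega
    rw [hk', hc _ (by omega) hi x w rfl, hxw, hc _ (by omega) (hxw ▸ hi) x' w' rfl]
  have hfar : ∀ x w : V, G.dist x w = G.dist x' w' → ∀ y, G.Adj w y → G.dist x y ≠ k :=
    fun x w hd y hy => by rcases hy.diff_dist_adj (u := x) with e | e | e <;> omega
  rw [hzero x w (hfar x w hxw), hzero x' w' (hfar x' w' rfl)]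

/-- These are the intersection numbers `p^i_{1k}`; the case `k = i` follows from the others
because every neighbourhood has `b 0` elements. -/
theorem IsDRG.card_filter_dist_eq (h : IsDRG G d b c) {x w x' w' : V}
    (hxw : G.dist x w = G.dist x' w') (k : ℕ) :
    #{y ∈ G.neighborFinset w | G.dist x y = k} =
      #{y ∈ G.neighborFinset w' | G.dist x' y = k} := by
  rcases ne_or_eq k (G.dist x w) with hk | rfl
  · exact h.card_filter_dist_eq_of_ne hxw hk
  have hsplit : ∀ x w : V, b 0 = #{y ∈ G.neighborFinset w | G.dist x y = G.dist x w} +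
      ∑ k ∈ (range (d + 1)).erase (G.dist x w),
        #{y ∈ G.neighborFinset w | G.dist x y = k} :=
    fun x w => by
      have hmem := mem_range.2 (Nat.lt_add_one_of_le (h.dist_le x w))
      rw [← h.card_neighborFinset w,
        add_sum_erase _ (fun k => #{y ∈ G.neighborFinset w | G.dist x y = k}) hmem]
      exact card_eq_sum_card_fiberwise fun y _ => mem_range.2 (Nat.lt_add_one_of_le (h.dist_le x y))
  have hrest :
      ∑ k ∈ (range (d + 1)).erase (G.dist x w), #{y ∈ G.neighborFinset w | G.dist x y = k} =
        ∑ k ∈ (range (d + 1)).erase (G.dist x w),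
          #{y ∈ G.neighborFinset w' | G.dist x' y = k} :=
    sum_congr rfl fun k hk => h.card_filter_dist_eq_of_ne hxw (ne_of_mem_erase hk)
  have e := hsplit x w
  have e' := hsplit x' w'
  rw [← hxw, ← hrest] at e'
  omega

theorem IsDRG.adjMatrix_pow_apply_eq (h : IsDRG G d b c) {R : Type*} [Semiring R] (n : ℕ)
    {w x w' x' : V} (hd : G.dist w x = G.dist w' x') :
    (G.adjMatrix R ^ n) w x = (G.adjMatrix R ^ n) w' x' := by
  induction n generalizing w x w' x' with
  | zero =>
    have : w = x ↔ w' = x' := by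
      rw [← h.connected.dist_eq_zero_iff, hd, h.connected.dist_eq_zero_iff]
    simp only [pow_zero, one_apply, this]
  | succ n ih =>
    set g : ℕ → R := Function.extend (fun p : V × V => G.dist p.1 p.2)
      (fun p => (G.adjMatrix R ^ n) p.1 p.2) 0
    have hfac : Function.FactorsThrough (fun p : V × V => (G.adjMatrix R ^ n) p.1 p.2)
        (fun p : V × V => G.dist p.1 p.2) := fun _ _ hpq => ih hpq
    have hg : ∀ y z, (G.adjMatrix R ^ n) y z = g (G.dist z y) := fun y z => by
      rw [SimpleGraph.dist_comm]
      exact (hfac.extend_apply 0 (y, z)).symm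
    have hexpand : ∀ w x : V, (G.adjMatrix R ^ (n + 1)) w x
        = ∑ k ∈ range (d + 1), #{y ∈ G.neighborFinset w | G.dist x y = k} • g k := by
      intro w x
      rw [pow_succ', SimpleGraph.adjMatrix_mul_apply]
      simp_rw [hg]
      rw [← sum_fiberwise_of_maps_to' (t := range (d + 1)) (g := fun y => G.dist x y)
        fun y _ => mem_range.2 (Nat.lt_add_one_of_le (h.dist_le x y))]
      simp only [sum_const]
    rw [hexpand, hexpand]
    refine sum_congr rfl fun k _ => ?_
    have hd' : G.dist x w = G.dist x' w' := by
      rw [SimpleGraph.dist_comm, hd, SimpleGraph.dist_comm]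
    rw [h.card_filter_dist_eq hd' k]

end DistanceRegular

theorem Matrix.exp_apply_eq_of_pow_apply_eq {m : Type*} [Fintype m] [DecidableEq m]
    (M : Matrix m m ℂ) {i j i' j' : m} (h : ∀ n : ℕ, (M ^ n) i j = (M ^ n) i' j') :
    NormedSpace.exp M i j = NormedSpace.exp M i' j' := by
  let _ : NormedRing (Matrix m m ℂ) := Matrix.linftyOpNormedRing
  let _ : NormedAlgebra ℂ (Matrix m m ℂ) := Matrix.linftyOpNormedAlgebra
  have hs := NormedSpace.exp_series_hasSum_exp' (𝕂 := ℂ) M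
  have hij := Pi.hasSum.1 (Pi.hasSum.1 hs i) j
  have hij' := Pi.hasSum.1 (Pi.hasSum.1 hs i') j'
  simp only [Matrix.smul_apply, h] at hij
  exact hij.unique hij'

section TransitionMatrix

variable {V : Type*} [Fintype V] [DecidableEq V] {G : SimpleGraph V}

theorem transitionMatrix_eq [DecidableRel G.Adj] (t : ℝ) :
    transitionMatrix G t = NormedSpace.exp ((Complex.I * t) • G.adjMatrix ℂ) := by
  unfold transitionMatrix
  congr

theorem commute_adjMatrix_transitionMatrix [DecidableRel G.Adj] (t : ℝ) :
    Commute (G.adjMatrix ℂ) (transitionMatrix G t) := by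
  rw [transitionMatrix_eq]
  exact Commute.exp_right ((Commute.refl _).smul_right _)

theorem transitionMatrix_conjTranspose_mul_self (t : ℝ) :
    (transitionMatrix G t)ᴴ * transitionMatrix G t = 1 := by
  classical
  set X := (Complex.I * t) • G.adjMatrix ℂ
  have hX : Xᴴ = -X := by
    rw [conjTranspose_smul, (G.isHermitian_adjMatrix ℂ).eq, ← neg_smul]
    simp [Complex.conj_ofReal]
  rw [transitionMatrix_eq, ← Matrix.exp_conjTranspose, hX,
    ← Matrix.exp_add_of_commute _ _ (Commute.refl X).neg_left, neg_add_cancel,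
    NormedSpace.exp_zero]

theorem IsDRG.transitionMatrix_apply_eq {d : ℕ} {b c : ℕ → ℕ} (h : IsDRG G d b c) (t : ℝ)
    {w x w' x' : V} (hd : G.dist w x = G.dist w' x') :
    transitionMatrix G t w x = transitionMatrix G t w' x' := by
  classical
  rw [transitionMatrix_eq]
  refine Matrix.exp_apply_eq_of_pow_apply_eq _ fun n => ?_
  rw [smul_pow, Matrix.smul_apply, Matrix.smul_apply, h.adjMatrix_pow_apply_eq n hd]

theorem HasPST.exists_transitionMatrix_apply {u v : V} {t : ℝ} (h : HasPST G u v t) :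
    ∃ μ ≠ 0, ∀ w, transitionMatrix G t w u = if w = v then μ else 0 := by
  obtain ⟨-, μ, hμ⟩ := h
  have hcol : ∀ w, transitionMatrix G t w u = if w = v then μ else 0 := fun w => by
    simpa [mulVec_single_one, Pi.single_apply] using congrFun hμ w
  refine ⟨μ, ?_, hcol⟩
  rintro rfl
  have hinj : Function.Injective (transitionMatrix G t).mulVec := by
    classical
    rw [Matrix.mulVec_injective_iff_isUnit, transitionMatrix_eq]
    exact Matrix.isUnit_exp _
  have := congrFun (hinj (hμ.trans ((zero_smul ℂ _).trans (mulVec_zero _).symm))) u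
  simp at this

end TransitionMatrix

section DistanceMatrix

variable {V : Type*} [Fintype V] [DecidableEq V] {G : SimpleGraph V} {i : ℕ}

theorem distMatrix_mul_self_apply_self (w : V) :
    (distMatrix G i * distMatrix G i) w w = #{y | G.dist w y = i} := by
  simp [distMatrix, mul_apply, SimpleGraph.dist_comm, ← ite_and, sum_boole]

theorem existsUnique_dist_eq_of_distMatrix_mul_self (hD : distMatrix G i * distMatrix G i = 1)
    (w : V) : ∃! x, G.dist w x = i := by
  have hw := distMatrix_mul_self_apply_self (G := G) (i := i) w
  rw [hD, one_apply_eq] at hw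
  obtain ⟨x, hx⟩ := card_eq_one.1 (by exact_mod_cast hw.symm)
  have hiff : ∀ y, G.dist w y = i ↔ y = x := fun y => by simpa using congrArg (y ∈ ·) hx
  exact ⟨x, (hiff x).2 rfl, fun y hy => (hiff y).1 hy⟩

theorem isPermOrderTwoNoFixed_distMatrix (hi : i ≠ 0) (hD : distMatrix G i * distMatrix G i = 1) :
    IsPermOrderTwoNoFixed (distMatrix G i) := by
  refine ⟨fun u v => ?_, ?_, fun u => ?_, hD, fun u => ?_⟩
  · simp only [distMatrix, of_apply]
    split_ifs <;> simp
  · ext u v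
    simp [distMatrix, SimpleGraph.dist_comm]
  · simp [distMatrix, hi.symm]
  · simpa [distMatrix] using existsUnique_dist_eq_of_distMatrix_mul_self hD u

theorem norm_eq_one_and_distMatrix_mul_self_eq_one {U : Matrix V V ℂ} {μ : ℂ}
    (hU : U = μ • (distMatrix G i).map (fun x : ℝ => (x : ℂ))) (hunit : Uᴴ * U = 1) {u : V}
    (hu : #{y | G.dist u y = i} = 1) :
    ‖μ‖ = 1 ∧ distMatrix G i * distMatrix G i = 1 := by
  have hDH : ((distMatrix G i).map (fun x : ℝ => (x : ℂ)))ᴴ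
      = (distMatrix G i).map (fun x : ℝ => (x : ℂ)) := by
    ext w x
    simp [distMatrix, SimpleGraph.dist_comm]
  have key : (‖μ‖ ^ 2 : ℝ) • (distMatrix G i * distMatrix G i) = 1 := by
    refine Matrix.map_injective Complex.ofReal_injective ?_
    dsimp only
    rw [Matrix.map_one _ Complex.ofReal_zero Complex.ofReal_one, ← hunit, hU, conjTranspose_smul,
      hDH, smul_mul_smul_comm, Complex.star_def, Complex.conj_mul']
    ext w x
    simp [mul_apply]
  have hμ : ‖μ‖ ^ 2 = 1 := by
    have := congrFun (congrFun key u) u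
    rwa [Matrix.smul_apply, distMatrix_mul_self_apply_self, hu, one_apply_eq, Nat.cast_one,
      smul_eq_mul, mul_one] at this
  refine ⟨(pow_eq_one_iff_of_nonneg (norm_nonneg μ) two_ne_zero).1 hμ, ?_⟩
  rwa [hμ, one_smul] at key

variable [DecidableRel G.Adj]

theorem exists_hom_forall_dist_eq_iff_of_commute (hD : distMatrix G i * distMatrix G i = 1)
    (hcomm : Commute (G.adjMatrix ℂ) ((distMatrix G i).map (fun x : ℝ => (x : ℂ)))) :
    ∃ f : G →g G, ∀ w x, G.dist w x = i ↔ x = f w := by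
  choose σ hσ huniq using existsUnique_dist_eq_of_distMatrix_mul_self hD
  have hiff : ∀ w x, G.dist w x = i ↔ x = σ w := fun w x =>
    ⟨huniq w x, by rintro rfl; exact hσ w⟩
  have hinv : Function.Involutive σ := fun w =>
    ((hiff (σ w) w).1 (SimpleGraph.dist_comm.trans (hσ w))).symm
  have hP :
      (distMatrix G i).map (fun x : ℝ => (x : ℂ)) = (hinv.toPerm σ).toPEquiv.toMatrix := by
    ext w x
    simp only [distMatrix, map_apply, of_apply, PEquiv.toMatrix_apply, hiff]
    split_ifs <;> simp_all [eq_comm]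
  rw [hP] at hcomm
  exact ⟨⟨σ, fun {x y} hxy =>
    (SimpleGraph.adj_apply_iff_of_commute (hinv.toPerm σ) hcomm x y).2 hxy⟩, hiff⟩

end DistanceMatrix

section PerfectStateTransfer

variable {V : Type*} [Fintype V] [DecidableEq V] {G : SimpleGraph V} {d : ℕ} {b c : ℕ → ℕ}
  {u v : V} {t : ℝ} {μ : ℂ}

theorem IsDRG.eq_of_dist_eq_of_transitionMatrix_apply (h : IsDRG G d b c) (hμ : μ ≠ 0)
    (hcol : ∀ w, transitionMatrix G t w u = if w = v then μ else 0) {y : V}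
    (hy : G.dist u y = G.dist u v) : y = v := by
  by_contra hyv
  have := h.transitionMatrix_apply_eq t
    (show G.dist y u = G.dist v u by rw [SimpleGraph.dist_comm, hy, SimpleGraph.dist_comm])
  rw [hcol, hcol, if_neg hyv, if_pos rfl] at this
  exact hμ this.symm

/-- Since every distance occurs from `u`, the entry of `U(t)` at each distance is read off the
`u`-th column. -/
theorem IsDRG.transitionMatrix_eq_smul_distMatrix (h : IsDRG G d b c) (hμ : μ ≠ 0)
    (hcol : ∀ w, transitionMatrix G t w u = if w = v then μ else 0) :
    transitionMatrix G t = μ • (distMatrix G (G.dist u v)).map (fun x : ℝ => (x : ℂ)) := by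
  ext w x
  obtain ⟨y, hy⟩ := h.exists_dist_eq u (h.dist_le w x)
  rw [h.transitionMatrix_apply_eq t (hy.symm.trans SimpleGraph.dist_comm), hcol]
  simp only [Matrix.smul_apply, map_apply, distMatrix, of_apply, ← hy]
  by_cases hyv : y = v
  · simp [hyv]
  · have : G.dist u y ≠ G.dist u v := fun e =>
      hyv (h.eq_of_dist_eq_of_transitionMatrix_apply hμ hcol e)
    simp [hyv, this]

end PerfectStateTransfer

/-- A distance-regular graph of diameter `d` admitting perfect state
transfer from `u` to `v` at time `τ` is antipodal with fibres of size 2, the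
vertices `u`, `v` are at distance `d`, the distance-`d` matrix is a fixed-point-free
permutation matrix of order two, and `U(τ) = λ • A_d` with `|λ| = 1`. -/
theorem stmt_1 {V : Type*} [Fintype V] [DecidableEq V] {d : ℕ}
    (G : SimpleGraph V)
    (hdrg : ∃ b c : ℕ → ℕ, IsDRG G d b c)
    (u v : V) (τ : ℝ)
    (hpst : HasPST G u v τ) :
    (∀ w : V, ∃! x : V, G.dist w x = d) ∧
    G.dist u v = d ∧
    IsPermOrderTwoNoFixed (distMatrix G d) ∧
    ∃ lam : ℂ, ‖lam‖ = 1 ∧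
      transitionMatrix G τ = lam • (distMatrix G d).map (fun x : ℝ => (x : ℂ)) := by
  classical
  obtain ⟨b, c, hdrg⟩ := hdrg
  obtain ⟨μ, hμ, hcol⟩ := hpst.exists_transitionMatrix_apply
  have hj : G.dist u v ≠ 0 := (hdrg.connected.pos_dist_of_ne hpst.1).ne'
  have hU := hdrg.transitionMatrix_eq_smul_distMatrix hμ hcol
  have hsphere : #{y | G.dist u y = G.dist u v} = 1 := card_eq_one.2 ⟨v, by
    ext y
    simpa using ⟨hdrg.eq_of_dist_eq_of_transitionMatrix_apply hμ hcol, fun e => e ▸ rfl⟩⟩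
  obtain ⟨hnorm, hD⟩ := norm_eq_one_and_distMatrix_mul_self_eq_one hU
    (transitionMatrix_conjTranspose_mul_self τ) hsphere
  have hcomm :
      Commute (G.adjMatrix ℂ) ((distMatrix G (G.dist u v)).map (fun x : ℝ => (x : ℂ))) := by
    have := (commute_adjMatrix_transitionMatrix (G := G) τ).smul_right μ⁻¹
    rwa [hU, inv_smul_smul₀ hμ] at this
  obtain ⟨f, hf⟩ := exists_hom_forall_dist_eq_iff_of_commute hD hcomm
  obtain ⟨p, q, hpq⟩ := hdrg.2.2.1
  have hd : G.dist u v = d := hdrg.connected.eq_of_forall_dist_eq_iff f hj hf hdrg.dist_le hpq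
  rw [hd] at hU hD hj
  exact ⟨existsUnique_dist_eq_of_distMatrix_mul_self hD, hd,
    isPermOrderTwoNoFixed_distMatrix hj hD, μ, hnorm, hU⟩
end

section
/- Let n ≥ 4 be even and let H be a symmetric n×n real matrix with all entries in {1, −1}, with H·Hᵀ = n·I, and with all diagonal entries equal to 1 (a symmetric Hadamard matrix with constant diagonal). Define the graph Γ(H) on vertex set {1, …, n} × {1, −1} in which (i, a) is adjacent to (j, b) if and only if i ≠ j and a·b = H_{ij}. Then Γ(H) is a distance-regular graph of diameter 3 with intersection array {n−1, n/2, 1; 1, n/2, n−1}, i.e., a distance-regular 2-fold antipodal cover of K_n with c = n/2. -/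
open Matrix

/-- `G` is a distance-regular 2-fold antipodal cover of `K_n` with parameter `c`,
i.e. a distance-regular graph of diameter 3 with intersection array
`{n-1, c, 1; 1, c, n-1}`. -/
def IsCoverKn {V : Type*} [Fintype V] [DecidableEq V] (G : SimpleGraph V)
    (n c : ℕ) : Prop :=
  ∃ b' c' : ℕ → ℕ, IsDRG G 3 b' c' ∧
    b' 0 = n - 1 ∧ b' 1 = c ∧ b' 2 = 1 ∧ c' 1 = 1 ∧ c' 2 = c ∧ c' 3 = n - 1

/-- The sign `±1` attached to a Boolean. -/
def signB (b : Bool) : ℝ := if b then 1 else -1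

/-- The graph `Γ(H)` associated to a symmetric Hadamard matrix `H` with constant
diagonal: vertices are pairs `(i, a)` with `i` an index and `a` a sign, and
`(i, a)` is adjacent to `(j, b)` iff `i ≠ j` and `a·b = H i j`. -/
def coverGraphOfHadamard {n : ℕ} (H : Matrix (Fin n) (Fin n) ℝ) :
    SimpleGraph (Fin n × Bool) :=
  SimpleGraph.fromRel (fun x y => x.1 ≠ y.1 ∧ signB x.2 * signB y.2 = H x.1 y.1)

/-! Writing `H` as the `±1`-image of a Boolean pattern `σ`, every vertex `(j, b)` has exactly one
neighbour `(k, b == σ j k)` over each index `k ≠ j`, so every intersection number counts indices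
`k`. Vertices `(i, a)` and `(j, b)` over distinct indices have a common neighbour over `k` exactly
when `(σ i k == σ j k) = (a == b)`. Orthogonality of rows `i` and `j` says that each value of
`σ i k == σ j k` is taken for exactly `n / 2` indices, and `k ∈ {i, j}` gives the value `σ i j`;
so adjacent vertices have `n / 2 - 2` common neighbours and non-adjacent ones `n / 2`. Hence the
distance is `0`, `1`, `2` or `3` according as the vertices are equal, adjacent, over distinct
indices but not adjacent, or antipodal over the same index. -/

open SimpleGraph Finset

lemma signB_mul_signB (a b : Bool) : signB a * signB b = signB (a == b) := by
  cases a <;> cases b <;> simp [signB]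

lemma signB_injective : Function.Injective signB := by
  intro a b h
  cases a <;> cases b <;> first | rfl | norm_num [signB] at h

lemma sum_signB {ι : Type*} [Fintype ι] (p : ι → Bool) :
    ∑ k, signB (p k) = 2 * (#{k | p k} : ℝ) - Fintype.card ι := by
  have h (b : Bool) : signB b = 2 * (if b then 1 else 0) - 1 := by cases b <;> norm_num [signB]
  simp only [h, sum_sub_distrib, ← mul_sum, sum_boole, sum_const, card_univ]
  simp

lemma two_mul_card_eq_of_sum_signB_mul_eq_zero {ι : Type*} [Fintype ι] {v w : ι → Bool}
    (h : ∑ k, signB (v k) * signB (w k) = 0) : 2 * #{k | v k = w k} = Fintype.card ι := by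
  simp only [signB_mul_signB, sum_signB, beq_iff_eq] at h
  exact_mod_cast (sub_eq_zero.mp h)

lemma exists_eq_map_signB {ι : Type*} {H : Matrix ι ι ℝ}
    (hent : ∀ i j, H i j = 1 ∨ H i j = -1) : ∃ σ : Matrix ι ι Bool, H = σ.map signB :=
  ⟨H.map (fun x => decide (x = 1)), by ext i j; rcases hent i j with h | h <;> norm_num [h, signB]⟩

namespace SimpleGraph

variable {V : Type*} {G : SimpleGraph V} {f : V → V → ℕ}

lemma exists_walk_length_eq_of_descent (hself : ∀ v, f v v = 0)
    (hdesc : ∀ u v, u ≠ v → ∃ w, G.Adj u w ∧ f w v + 1 = f u v) (u v : V) :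
    ∃ p : G.Walk u v, p.length = f u v := by
  induction h : f u v generalizing u with
  | zero =>
    obtain rfl : u = v := by
      by_contra huv
      obtain ⟨w, -, hw⟩ := hdesc u v huv
      omega
    exact ⟨.nil, rfl⟩
  | succ m ih =>
    obtain ⟨w, huw, hw⟩ := hdesc u v (by rintro rfl; simp [hself] at h)
    obtain ⟨p, hp⟩ := ih w (by omega)
    exact ⟨.cons huw p, by simp [hp]⟩

lemma le_length_of_lipschitz (hself : ∀ v, f v v = 0)
    (hlip : ∀ u w v, G.Adj u w → f u v ≤ f w v + 1) {u v : V} (p : G.Walk u v) :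
    f u v ≤ p.length := by
  induction p with
  | nil => simp [hself]
  | cons h p ih => exact (hlip _ _ _ h).trans (by simp [ih])

lemma dist_eq_of_lipschitz_of_descent (hself : ∀ v, f v v = 0)
    (hlip : ∀ u w v, G.Adj u w → f u v ≤ f w v + 1)
    (hdesc : ∀ u v, u ≠ v → ∃ w, G.Adj u w ∧ f w v + 1 = f u v) (u v : V) :
    G.dist u v = f u v := by
  obtain ⟨p, hp⟩ := exists_walk_length_eq_of_descent hself hdesc u v
  obtain ⟨q, hq⟩ := p.reachable.exists_walk_length_eq_dist
  exact le_antisymm (hp ▸ dist_le p) (hq ▸ le_length_of_lipschitz hself hlip q)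

end SimpleGraph

section SignCover

variable {n : ℕ}

/-- The sign pattern (`true` for `+1`) of a symmetric Hadamard matrix with diagonal `1`; the last
field is orthogonality of distinct rows. -/
structure IsHadamardSignPattern (σ : Matrix (Fin n) (Fin n) Bool) : Prop where
  isSymm : σ.IsSymm
  diag : ∀ i, σ i i = true
  two_mul_card_agree : ∀ i j, i ≠ j → 2 * #{k | σ i k = σ j k} = n

abbrev signCover (σ : Matrix (Fin n) (Fin n) Bool) : SimpleGraph (Fin n × Bool) :=
  coverGraphOfHadamard (σ.map signB)

def coverDist (σ : Matrix (Fin n) (Fin n) Bool) (x y : Fin n × Bool) : ℕ :=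
  if x.1 = y.1 then (if x.2 = y.2 then 0 else 3)
  else if (x.2 == y.2) = σ x.1 y.1 then 1 else 2

variable {σ : Matrix (Fin n) (Fin n) Bool}

lemma IsHadamardSignPattern.card_filter_beq_eq (hσ : IsHadamardSignPattern σ) {i j : Fin n}
    (hij : i ≠ j) (s : Bool) : #{k | (σ i k == σ j k) = s} = n / 2 := by
  have h := hσ.two_mul_card_agree i j hij
  have hsplit := card_filter_add_card_filter_not (s := (univ : Finset (Fin n)))
    (fun k => σ i k = σ j k)
  cases s <;> simp only [beq_eq_false_iff_ne, ne_eq, beq_iff_eq, card_univ, Fintype.card_fin]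
    at hsplit ⊢ <;> omega

lemma signCover_adj (hσ : σ.IsSymm) {i j : Fin n} {a b : Bool} :
    (signCover σ).Adj (i, a) (j, b) ↔ i ≠ j ∧ (a == b) = σ i j := by
  simp only [coverGraphOfHadamard, fromRel_adj, Matrix.map_apply, signB_mul_signB,
    signB_injective.eq_iff, ne_eq, Prod.mk.injEq, hσ.apply j i, Bool.beq_comm (a := b)]
  tauto

lemma signCover_adj_iff_eq_beq (hσ : σ.IsSymm) {j k : Fin n} {b c : Bool} :
    (signCover σ).Adj (j, b) (k, c) ↔ j ≠ k ∧ c = (b == σ j k) := by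
  rw [signCover_adj hσ]
  cases b <;> cases c <;> cases σ j k <;> simp

lemma signCover_adj_mk_beq (hσ : σ.IsSymm) {i k : Fin n} (hik : i ≠ k) (a : Bool) :
    (signCover σ).Adj (i, a) (k, a == σ i k) :=
  (signCover_adj hσ).mpr ⟨hik, by cases a <;> simp⟩

lemma coverDist_comm (hσ : σ.IsSymm) (x y : Fin n × Bool) : coverDist σ x y = coverDist σ y x := by
  simp only [coverDist, eq_comm (a := x.1), eq_comm (a := x.2), Bool.beq_comm (a := x.2),
    hσ.apply x.1 y.1]

lemma coverDist_mk_beq (hσ : σ.IsSymm) (i j k : Fin n) (a b : Bool) :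
    coverDist σ (i, a) (k, b == σ j k) =
      if k = i then (if (a == b) = σ i j then 0 else 3)
      else if (σ i k == σ j k) = (a == b) then 1 else 2 := by
  by_cases hki : k = i
  · subst hki
    simp only [coverDist, if_true, hσ.apply k j]
    cases a <;> cases b <;> cases σ k j <;> simp
  · simp only [coverDist, Ne.symm hki, hki, if_false]
    cases a <;> cases b <;> cases σ i k <;> cases σ j k <;> simp

lemma coverDist_le_of_adj (hσ : σ.IsSymm) {u w : Fin n × Bool} (huw : (signCover σ).Adj u w)
    (v : Fin n × Bool) : coverDist σ u v ≤ coverDist σ w v + 1 := by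
  obtain ⟨i, a⟩ := u; obtain ⟨k, c⟩ := w; obtain ⟨j, b⟩ := v
  obtain ⟨hik, rfl⟩ := (signCover_adj_iff_eq_beq hσ).mp huw
  rw [coverDist_comm hσ (k, _), coverDist_mk_beq hσ]
  by_cases hij : i = j
  · subst hij
    by_cases hab : a = b
    · simp [coverDist, hab]
    · simp [coverDist, hab, Ne.symm hab, Ne.symm hik]
  · unfold coverDist
    dsimp only
    split_ifs <;> simp_all [hσ.apply i j, Bool.beq_comm]

lemma IsHadamardSignPattern.ne_of_beq_ne (hσ : IsHadamardSignPattern σ) {i j k : Fin n}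
    (hk : (σ i k == σ j k) ≠ σ i j) : k ≠ i ∧ k ≠ j := by
  constructor <;> rintro rfl
  · rw [hσ.diag, hσ.isSymm.apply, Bool.true_beq] at hk
    exact hk rfl
  · rw [hσ.diag, beq_true] at hk
    exact hk rfl

lemma IsHadamardSignPattern.exists_adj_coverDist_add_one_eq (hσ : IsHadamardSignPattern σ)
    (hn : 2 ≤ n) {u v : Fin n × Bool} (huv : u ≠ v) :
    ∃ w, (signCover σ).Adj u w ∧ coverDist σ w v + 1 = coverDist σ u v := by
  obtain ⟨i, a⟩ := u; obtain ⟨j, b⟩ := v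
  by_cases hij : i = j
  · subst hij
    have hab : a ≠ b := by rintro rfl; exact huv rfl
    obtain ⟨k, hki⟩ := Fintype.exists_ne_of_one_lt_card (by simp; omega) i
    refine ⟨(k, a == σ i k), signCover_adj_mk_beq hσ.isSymm (Ne.symm hki) a, ?_⟩
    rw [coverDist_comm hσ.isSymm, coverDist_mk_beq hσ.isSymm]
    simp [coverDist, hki, hab, Ne.symm hab]
  by_cases hadj : (a == b) = σ i j
  · exact ⟨(j, b), (signCover_adj hσ.isSymm).mpr ⟨hij, hadj⟩, by simp [coverDist, hij, hadj]⟩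
  obtain ⟨k, hk⟩ : (filter (fun k => (σ i k == σ j k) = (a == b)) univ).Nonempty :=
    card_pos.mp (by rw [hσ.card_filter_beq_eq hij]; omega)
  simp only [mem_filter, mem_univ, true_and] at hk
  obtain ⟨hki, hkj⟩ := hσ.ne_of_beq_ne (hk ▸ hadj)
  refine ⟨(k, a == σ i k), signCover_adj_mk_beq hσ.isSymm (Ne.symm hki) a, ?_⟩
  rw [coverDist_comm hσ.isSymm, coverDist_mk_beq hσ.isSymm]
  simp [coverDist, hij, hkj, hadj, Bool.beq_comm, hk]

lemma IsHadamardSignPattern.dist_signCover (hσ : IsHadamardSignPattern σ) (hn : 2 ≤ n)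
    (u v : Fin n × Bool) : (signCover σ).dist u v = coverDist σ u v :=
  dist_eq_of_lipschitz_of_descent (by simp [coverDist])
    (fun _ _ v huw => coverDist_le_of_adj hσ.isSymm huw v)
    (fun _ _ huv => hσ.exists_adj_coverDist_add_one_eq hn huv) u v

lemma IsHadamardSignPattern.connected_signCover (hσ : IsHadamardSignPattern σ) (hn : 2 ≤ n) :
    (signCover σ).Connected :=
  have : Nonempty (Fin n × Bool) := ⟨(⟨0, by omega⟩, true)⟩
  ⟨fun u v => (exists_walk_length_eq_of_descent (by simp [coverDist])
    (fun _ _ huv => hσ.exists_adj_coverDist_add_one_eq hn huv) u v).elim fun p _ => p.reachable⟩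

lemma IsHadamardSignPattern.card_adj_and_dist_eq (hσ : IsHadamardSignPattern σ) (hn : 2 ≤ n)
    (u : Fin n × Bool) (j : Fin n) (b : Bool) (m : ℕ) :
    Nat.card {w // (signCover σ).Adj (j, b) w ∧ (signCover σ).dist u w = m} =
      #{k | k ≠ j ∧ coverDist σ u (k, b == σ j k) = m} := by
  classical
  rw [Nat.card_eq_fintype_card, Fintype.card_subtype,
    ← card_image_of_injective _ (f := fun k => (k, b == σ j k)) fun k l h => congrArg Prod.fst h]
  congr 1
  ext ⟨k, c⟩
  simp only [mem_filter, mem_univ, true_and, mem_image, signCover_adj_iff_eq_beq hσ.isSymm,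
    hσ.dist_signCover hn, Prod.mk.injEq]
  constructor
  · rintro ⟨⟨hjk, rfl⟩, hm⟩
    exact ⟨k, ⟨Ne.symm hjk, hm⟩, rfl, rfl⟩
  · rintro ⟨k, ⟨hkj, hm⟩, rfl, rfl⟩
    exact ⟨⟨Ne.symm hkj, rfl⟩, hm⟩

lemma card_coverDist_self (j : Fin n) (b : Bool) :
    #{k | k ≠ j ∧ coverDist σ (j, b) (k, b == σ j k) = 1} = n - 1 := by
  calc _ = #({j}ᶜ : Finset (Fin n)) := by
        congr 1; ext k
        simp only [mem_filter, mem_univ, true_and, mem_compl, mem_singleton, coverDist,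
          and_iff_left_iff_imp]
        intro hkj
        simp [Ne.symm hkj]
    _ = n - 1 := by simp [card_compl]

lemma card_coverDist_antipode {j : Fin n} {a b : Bool} (hab : a ≠ b) :
    #{k | k ≠ j ∧ coverDist σ (j, a) (k, b == σ j k) = 2} = n - 1 := by
  calc _ = #({j}ᶜ : Finset (Fin n)) := by
        congr 1; ext k
        simp only [mem_filter, mem_univ, true_and, mem_compl, mem_singleton, coverDist,
          and_iff_left_iff_imp]
        intro hkj
        revert hab
        cases a <;> cases b <;> cases σ j k <;> simp [Ne.symm hkj]
    _ = n - 1 := by simp [card_compl]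

lemma card_coverDist_of_adj_zero (hσ : σ.IsSymm) {i j : Fin n} {a b : Bool} (hij : i ≠ j)
    (hab : (a == b) = σ i j) :
    #{k | k ≠ j ∧ coverDist σ (i, a) (k, b == σ j k) = 0} = 1 := by
  rw [card_eq_one]
  refine ⟨i, ?_⟩
  ext k
  by_cases hki : k = i <;> simp [coverDist_mk_beq hσ, hki, hij, hab, ite_eq_iff]

lemma card_coverDist_of_not_adj_three (hσ : σ.IsSymm) {i j : Fin n} {a b : Bool} (hij : i ≠ j)
    (hab : (a == b) ≠ σ i j) :
    #{k | k ≠ j ∧ coverDist σ (i, a) (k, b == σ j k) = 3} = 1 := by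
  rw [card_eq_one]
  refine ⟨i, ?_⟩
  ext k
  by_cases hki : k = i <;> simp [coverDist_mk_beq hσ, hki, hij, hab, ite_eq_iff]

lemma IsHadamardSignPattern.card_coverDist_of_adj_two (hσ : IsHadamardSignPattern σ)
    {i j : Fin n} {a b : Bool} (hij : i ≠ j) (hab : (a == b) = σ i j) :
    #{k | k ≠ j ∧ coverDist σ (i, a) (k, b == σ j k) = 2} = n / 2 := by
  rw [← hσ.card_filter_beq_eq hij (!σ i j)]
  congr 1; ext k
  simp only [mem_filter, mem_univ, true_and, coverDist_mk_beq hσ.isSymm, hab, Bool.eq_not]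
  by_cases hki : k = i
  · simp [hki, hσ.diag, hσ.isSymm.apply i j]
  constructor
  · rintro ⟨-, hk⟩
    simpa [hki, ite_eq_iff] using hk
  · intro hk
    exact ⟨(hσ.ne_of_beq_ne hk).2, by simp [hki, hk]⟩

lemma IsHadamardSignPattern.card_coverDist_of_not_adj_one (hσ : IsHadamardSignPattern σ)
    {i j : Fin n} {a b : Bool} (hij : i ≠ j) (hab : (a == b) ≠ σ i j) :
    #{k | k ≠ j ∧ coverDist σ (i, a) (k, b == σ j k) = 1} = n / 2 := by
  rw [← hσ.card_filter_beq_eq hij (!σ i j), ← Bool.eq_not.mpr hab]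
  congr 1; ext k
  simp only [mem_filter, mem_univ, true_and, coverDist_mk_beq hσ.isSymm]
  by_cases hki : k = i
  · simp [hki, hσ.diag, hσ.isSymm.apply i j, Ne.symm hab, hab]
  constructor
  · rintro ⟨-, hk⟩
    simpa [hki, ite_eq_iff] using hk
  · intro hk
    exact ⟨(hσ.ne_of_beq_ne (hk ▸ hab)).2, by simp [hki, hk]⟩

lemma IsHadamardSignPattern.isCoverKn (hσ : IsHadamardSignPattern σ) (hn : 2 ≤ n) :
    IsCoverKn (signCover σ) n (n / 2) := by
  have hdist := hσ.dist_signCover hn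
  refine ⟨fun m => [n - 1, n / 2, 1].getD m 0, fun m => [0, 1, n / 2, n - 1].getD m 0,
    ⟨hσ.connected_signCover hn, fun u v => ?_, ⟨(⟨0, by omega⟩, true), (⟨0, by omega⟩, false), ?_⟩,
      ?_, ?_⟩, rfl, rfl, rfl, rfl, rfl, rfl⟩
  · rw [hdist]; unfold coverDist; split_ifs <;> omega
  · simp [hdist, coverDist]
  · rintro m hm1 hm3 ⟨i, a⟩ ⟨j, b⟩ huv
    rw [hσ.card_adj_and_dist_eq hn]
    rw [hdist, coverDist] at huv
    dsimp only at huv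
    split_ifs at huv with hij hab hadj <;> subst huv
    · omega
    · subst hij
      exact card_coverDist_antipode hab
    · exact card_coverDist_of_adj_zero hσ.isSymm hij hadj
    · exact hσ.card_coverDist_of_not_adj_one hij hadj
  · rintro m hm ⟨i, a⟩ ⟨j, b⟩ huv
    rw [hσ.card_adj_and_dist_eq hn]
    rw [hdist, coverDist] at huv
    dsimp only at huv
    split_ifs at huv with hij hab hadj <;> subst huv
    · subst hij hab
      exact card_coverDist_self i a
    · omega
    · exact hσ.card_coverDist_of_adj_two hij hadj
    · exact card_coverDist_of_not_adj_three hσ.isSymm hij hadj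

lemma isHadamardSignPattern_of_map_signB {σ : Matrix (Fin n) (Fin n) Bool}
    (hsymm : (σ.map signB).IsSymm) (hHad : σ.map signB * (σ.map signB)ᵀ = (n : ℝ) • 1)
    (hdiag : ∀ i, σ.map signB i i = 1) : IsHadamardSignPattern σ where
  isSymm := Matrix.IsSymm.ext fun i j => signB_injective (hsymm.apply i j)
  diag i := signB_injective (hdiag i)
  two_mul_card_agree i j hij := by
    have hrow := congr_fun (congr_fun hHad i) j
    simp only [Matrix.mul_apply, Matrix.transpose_apply, Matrix.map_apply, Matrix.smul_apply,
      Matrix.one_apply_ne hij, smul_zero] at hrow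
    simpa using two_mul_card_eq_of_sum_signB_mul_eq_zero hrow

end SignCover

theorem stmt_7_general (n : ℕ) (hn : 4 ≤ n)
    (H : Matrix (Fin n) (Fin n) ℝ)
    (hsymm : H.IsSymm)
    (hent : ∀ i j, H i j = 1 ∨ H i j = -1)
    (hHad : H * Hᵀ = (n : ℝ) • 1)
    (hdiag : ∀ i, H i i = 1) :
    IsCoverKn (coverGraphOfHadamard H) n (n / 2) := by
  obtain ⟨σ, rfl⟩ := exists_eq_map_signB hent
  exact (isHadamardSignPattern_of_map_signB hsymm hHad hdiag).isCoverKn (by omega)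

/-- For a symmetric `n × n` Hadamard matrix `H` with all diagonal
entries `1` (`n ≥ 4` even), the graph `Γ(H)` is a distance-regular 2-fold
antipodal cover of `K_n` with intersection array `{n-1, n/2, 1; 1, n/2, n-1}`. -/
theorem stmt_7 (n : ℕ) (hn : 4 ≤ n) (hne : Even n)
    (H : Matrix (Fin n) (Fin n) ℝ)
    (hsymm : H.IsSymm)
    (hent : ∀ i j, H i j = 1 ∨ H i j = -1)
    (hHad : H * Hᵀ = (n : ℝ) • 1)
    (hdiag : ∀ i, H i i = 1) :
    IsCoverKn (coverGraphOfHadamard H) n (n / 2) :=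
  stmt_7_general n hn H hsymm hent hHad hdiag
end

section
/- For every d ≥ 1, the Hamming d-cube Q_d (the graph on vertex set (ZMod 2)^d in which two vertices are adjacent iff they differ in exactly one coordinate) admits perfect state transfer at time π/2 from each vertex u to its antipodal vertex u + 𝟙, where 𝟙 is the all-ones vector. -/
open Matrix

/-- The Hamming `d`-cube: vertices are vectors in `(ZMod 2)^d`, adjacent iff they
differ in exactly one coordinate. -/
def cubeGraph (d : ℕ) : SimpleGraph (Fin d → ZMod 2) :=
  SimpleGraph.fromRel (fun u v => (Finset.univ.filter fun i => u i ≠ v i).card = 1)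

/-!
The `d`-cube is the Cayley graph of `(ZMod 2)^d` with respect to the unit vectors `eⱼ`, so
its adjacency matrix is the sum of the translation matrices `Pⱼ` by `eⱼ`. These commute and
square to the identity, hence `exp (i t Pⱼ) = cos t • 1 + i sin t • Pⱼ`, which at `t = π/2`
is `i • Pⱼ`. Therefore `U(π/2) = i^d • P`, where `P` is translation by `∑ eⱼ = 𝟙`, and `P`
sends `e_u` to `e_{u+𝟙}`.
-/

section Involution

variable {m : Type*} [Fintype m] [DecidableEq m]

theorem Matrix.exp_smul_of_mul_self_eq_one {S : Matrix m m ℂ} (hS : S * S = 1) (c : ℂ) :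
    NormedSpace.exp (c • S) = Complex.cosh c • 1 + Complex.sinh c • S := by
  let : NormedRing (Matrix m m ℂ) := Matrix.linftyOpNormedRing
  let : NormedAlgebra ℂ (Matrix m m ℂ) := Matrix.linftyOpNormedAlgebra
  rw [NormedSpace.exp_eq_tsum (𝕂 := ℂ)]
  refine HasSum.tsum_eq (HasSum.even_add_odd ?_ ?_)
  · convert (Complex.hasSum_cosh c).smul_const (1 : Matrix m m ℂ) using 2 with k
    · rfl
    rw [smul_pow, pow_mul S, sq, hS, one_pow, smul_smul, mul_comm]
    rfl
  · convert (Complex.hasSum_sinh c).smul_const S using 2 with k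
    · rfl
    rw [smul_pow, pow_succ S, pow_mul S, sq, hS, one_pow, one_mul, smul_smul, mul_comm]
    rfl

theorem Matrix.exp_I_pi_div_two_smul_of_mul_self_eq_one {S : Matrix m m ℂ} (hS : S * S = 1) :
    NormedSpace.exp ((Complex.I * ((Real.pi / 2 : ℝ) : ℂ)) • S) = Complex.I • S := by
  have hcosh : Complex.cosh (Complex.I * ((Real.pi / 2 : ℝ) : ℂ)) = 0 := by
    rw [mul_comm, Complex.cosh_mul_I]
    push_cast
    exact Complex.cos_pi_div_two
  have hsinh : Complex.sinh (Complex.I * ((Real.pi / 2 : ℝ) : ℂ)) = Complex.I := by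
    rw [mul_comm, Complex.sinh_mul_I]
    push_cast
    rw [Complex.sin_pi_div_two, one_mul]
  rw [exp_smul_of_mul_self_eq_one hS, hcosh, hsinh, zero_smul, zero_add]

end Involution

section Translation

variable {G R : Type*} [AddCommGroup G] [DecidableEq G]

theorem Matrix.permMatrix_addRight_apply [Zero R] [One R] (x a b : G) :
    (Equiv.addRight x).permMatrix R a b = if a + x = b then 1 else 0 := by
  simp

theorem Matrix.sum_permMatrix_addRight_apply [NonAssocSemiring R] {ι : Type*} [Fintype ι]
    {x : ι → G} (hx : Function.Injective x) (a b : G) :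
    (∑ j, (Equiv.addRight (x j)).permMatrix R) a b = if ∃ j, a + x j = b then 1 else 0 := by
  simp only [Matrix.sum_apply, permMatrix_addRight_apply]
  split_ifs with h
  · obtain ⟨j, rfl⟩ := h
    rw [Finset.sum_eq_single j (fun k _ hk => if_neg fun h => hk (hx (add_left_cancel h)))
      (by simp)]
    simp
  · simp_all

variable [Fintype G]

theorem Matrix.permMatrix_addRight_mul [NonAssocSemiring R] (x y : G) :
    (Equiv.addRight x).permMatrix R * (Equiv.addRight y).permMatrix R =
      (Equiv.addRight (x + y)).permMatrix R := by
  rw [← permMatrix_mul, ← Equiv.addRight_add]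

theorem Matrix.permMatrix_addRight_mulVec_single [NonAssocSemiring R] (x u : G) :
    (Equiv.addRight x).permMatrix R *ᵥ Pi.single u 1 = Pi.single (u - x) 1 := by
  ext v
  simp [Pi.single_apply, eq_sub_iff_add_eq]

theorem Matrix.exp_I_pi_div_two_smul_sum_permMatrix_addRight {ι : Type*} (s : Finset ι)
    {x : ι → G} (hx : ∀ j, x j + x j = 0) :
    NormedSpace.exp ((Complex.I * ((Real.pi / 2 : ℝ) : ℂ)) •
        ∑ j ∈ s, (Equiv.addRight (x j)).permMatrix ℂ) =
      Complex.I ^ s.card • (Equiv.addRight (∑ j ∈ s, x j)).permMatrix ℂ := by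
  classical
  have hcomm (y z : G) :
      Commute ((Equiv.addRight y).permMatrix ℂ) ((Equiv.addRight z).permMatrix ℂ) := by
    rw [Commute, SemiconjBy, permMatrix_addRight_mul, permMatrix_addRight_mul, add_comm]
  induction s using Finset.induction with
  | empty => simp
  | insert a s ha ih =>
    have hinv :
        (Equiv.addRight (x a)).permMatrix ℂ * (Equiv.addRight (x a)).permMatrix ℂ = 1 := by
      rw [permMatrix_addRight_mul, hx, Equiv.addRight_zero, permMatrix_one]
    rw [Finset.sum_insert ha, Finset.sum_insert ha, smul_add, Matrix.exp_add_of_commute, ih,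
      exp_I_pi_div_two_smul_of_mul_self_eq_one hinv, smul_mul_smul, permMatrix_addRight_mul,
      Finset.card_insert_of_notMem ha, pow_succ']
    exact ((Commute.sum_right s _ _ fun j _ => hcomm _ _).smul_left _).smul_right _

end Translation

theorem Pi.single_one_injective {ι R : Type*} [DecidableEq ι] [Zero R] [One R]
    [NeZero (1 : R)] :
    Function.Injective fun j : ι => (Pi.single j 1 : ι → R) := by
  intro i j h
  by_contra hij
  simpa [hij] using congrFun h i

theorem ZMod.ne_iff_add_one_eq (a b : ZMod 2) : a ≠ b ↔ a + 1 = b := by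
  revert a b
  decide

section Cube

variable {d : ℕ}

theorem card_filter_ne_eq_one_iff_exists_add_single (a b : Fin d → ZMod 2) :
    (Finset.univ.filter fun i => a i ≠ b i).card = 1 ↔ ∃ j, a + Pi.single j 1 = b := by
  simp only [Finset.card_eq_one, Finset.ext_iff, funext_iff, Finset.mem_filter,
    Finset.mem_univ, true_and, Finset.mem_singleton, Pi.add_apply]
  refine exists_congr fun j => forall_congr' fun i => ?_
  by_cases hij : i = j
  · subst hij
    simp [ZMod.ne_iff_add_one_eq]
  · simp [hij]

theorem cubeGraph_adj_iff (a b : Fin d → ZMod 2) :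
    (cubeGraph d).Adj a b ↔ ∃ j, a + Pi.single j 1 = b := by
  have hsymm : (Finset.univ.filter fun i => b i ≠ a i) =
      Finset.univ.filter fun i => a i ≠ b i := by
    simp_rw [ne_comm]
  rw [cubeGraph, SimpleGraph.fromRel_adj, hsymm, or_self,
    card_filter_ne_eq_one_iff_exists_add_single, and_iff_right_iff_imp]
  rintro ⟨j, rfl⟩ h
  simpa using congrFun h j

theorem adjMatrix_cubeGraph (R : Type*) [NonAssocSemiring R] [DecidableRel (cubeGraph d).Adj] :
    (cubeGraph d).adjMatrix R = ∑ j : Fin d, (Equiv.addRight (Pi.single j 1)).permMatrix R := by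
  ext a b
  simp only [SimpleGraph.adjMatrix_apply, sum_permMatrix_addRight_apply Pi.single_one_injective,
    cubeGraph_adj_iff]
  congr

theorem transitionMatrix_cubeGraph_pi_div_two :
    transitionMatrix (cubeGraph d) (Real.pi / 2) =
      Complex.I ^ d • (Equiv.addRight (fun _ => 1)).permMatrix ℂ := by
  have hsingle (j : Fin d) : (Pi.single j 1 : Fin d → ZMod 2) + Pi.single j 1 = 0 := by
    rw [← Pi.single_add, show (1 : ZMod 2) + 1 = 0 from rfl, Pi.single_zero]
  rw [transitionMatrix, @adjMatrix_cubeGraph d ℂ _ (Classical.decRel _),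
    exp_I_pi_div_two_smul_sum_permMatrix_addRight _ hsingle, Finset.card_univ, Fintype.card_fin,
    Finset.univ_sum_single]

end Cube

/-- For every `d ≥ 1`, the Hamming `d`-cube admits perfect state
transfer at time `π/2` from each vertex `u` to its antipode `u + 𝟙`. -/
theorem stmt_12 (d : ℕ) (hd : 1 ≤ d) :
    ∀ u : Fin d → ZMod 2,
      HasPST (cubeGraph d) u (u + fun _ => 1) (Real.pi / 2) := by
  intro u
  have hantipode : u - (fun _ => 1) = u + fun _ => 1 := by
    rw [sub_eq_add_neg, Pi.neg_def]
    simp only [ZMod.neg_eq_self_mod_two]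
  refine ⟨fun h => by simpa using congrFun h ⟨0, hd⟩, Complex.I ^ d, ?_⟩
  rw [transitionMatrix_cubeGraph_pi_div_two, smul_mulVec, permMatrix_addRight_mulVec_single,
    hantipode]
end

section
/- For every d ≥ 1, the halved 2d-cube (the graph whose vertices are the vectors of even Hamming weight in (ZMod 2)^{2d}, two vertices being adjacent iff their Hamming distance is exactly 2) admits perfect state transfer at time π/2 from each vertex u to the vertex u + 𝟙, where 𝟙 is the all-ones vector. -/
open Matrix

/-- The halved `2d`-cube: vertices are the vectors of even Hamming weight in
`(ZMod 2)^(2d)`, adjacent iff their Hamming distance is exactly 2. -/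
def halvedCube (d : ℕ) :
    SimpleGraph {u : Fin (2 * d) → ZMod 2 //
      Even (Finset.univ.filter fun i => u i ≠ 0).card} :=
  SimpleGraph.fromRel
    (fun u v => (Finset.univ.filter fun i => u.1 i ≠ v.1 i).card = 2)

/-!
The characters `ψ` of `(ZMod 2)^(2d)`, restricted to the even-weight vertices, are eigenvectors
of the adjacency matrix: translating by weight-2 vectors gives the eigenvalue
`λ_ψ = ∑_{|w| = 2} ψ w`. With `s_i = ψ e_i = ±1` one has `(∑ s_i)² = 2d + 2 λ_ψ`, so
`λ_ψ = 2 (d - k)² - d` where `k` counts the `s_i = -1`, and therefore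
`exp (i π λ_ψ / 2) = i^d (-1)^k = i^d ψ 𝟙`. Thus `U(π/2)` acts on each character as
multiplication by `i^d ψ 𝟙`, and Fourier inversion of the point mass at `u` turns this into
`U(π/2) e_u = i^d e_{u + 𝟙}`.
-/

open Finset

theorem Matrix.exp_mulVec_of_mulVec_eq_smul {ι : Type*} [Fintype ι] [DecidableEq ι]
    {M : Matrix ι ι ℂ} {x : ι → ℂ} {μ : ℂ} (h : M *ᵥ x = μ • x) :
    NormedSpace.exp M *ᵥ x = Complex.exp μ • x := by
  let _ : NormedRing (Matrix ι ι ℂ) := Matrix.linftyOpNormedRing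
  let _ : NormedAlgebra ℂ (Matrix ι ι ℂ) := Matrix.linftyOpNormedAlgebra
  have hpow (n : ℕ) : M ^ n *ᵥ x = μ ^ n • x := by
    induction n with
    | zero => simp
    | succ n ih => rw [pow_succ, ← mulVec_mulVec, h, mulVec_smul, ih, smul_smul, pow_succ']
  have hM := (NormedSpace.exp_series_hasSum_exp' (𝕂 := ℂ) M).map
    (Matrix.mulVec.addMonoidHomLeft x) (continuous_id.matrix_mulVec continuous_const)
  have hμ := (NormedSpace.exp_series_hasSum_exp' (𝕂 := ℂ) μ).smul_const x
  rw [Complex.exp_eq_exp_ℂ]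
  refine hM.unique ?_
  convert hμ using 2 with n
  simp [Matrix.mulVec.addMonoidHomLeft, smul_mulVec, hpow, smul_smul]

theorem AddChar.map_sum_eq_prod {A M ι : Type*} [AddCommMonoid A] [CommMonoid M]
    (ψ : AddChar A M) (s : Finset ι) (x : ι → A) :
    ψ (∑ i ∈ s, x i) = ∏ i ∈ s, ψ (x i) :=
  map_prod ψ.toMonoidHom (fun i => Multiplicative.ofAdd (x i)) s

section Fourier

variable {G : Type*} [AddCommGroup G] [Fintype G] [DecidableEq G] {p : G → Prop}

theorem Pi.single_one_eq_sum_addChar (u : Subtype p) :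
    (Pi.single u 1 : Subtype p → ℂ) =
      (Fintype.card G : ℂ)⁻¹ •
        ∑ ψ : AddChar G ℂ, ψ (-u.1) • fun v : Subtype p => ψ v.1 := by
  ext v
  simp only [Pi.smul_apply, Finset.sum_apply, smul_eq_mul, ← AddChar.map_add_eq_mul,
    AddChar.sum_apply_eq_ite, neg_add_eq_zero, Subtype.ext_iff, Pi.single_apply, eq_comm]
  split_ifs <;> simp

theorem Matrix.mulVec_single_of_mulVec_addChar [DecidablePred p]
    (T : Matrix (Subtype p) (Subtype p) ℂ) (c : ℂ) (b : G)
    (hT : ∀ ψ : AddChar G ℂ,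
      T *ᵥ (fun v : Subtype p => ψ v.1) = (c * ψ b) • fun v : Subtype p => ψ v.1)
    {u v : Subtype p} (huv : v.1 = u.1 - b) :
    T *ᵥ Pi.single u 1 = c • Pi.single v 1 := by
  rw [Pi.single_one_eq_sum_addChar u, Pi.single_one_eq_sum_addChar v]
  simp only [mulVec_smul, mulVec_sum, hT, Finset.smul_sum, smul_smul]
  refine Finset.sum_congr rfl fun ψ _ => ?_
  rw [huv, neg_sub, sub_eq_neg_add, AddChar.map_add_eq_mul]
  congr 1
  ring

end Fourier

section BinaryVectors

theorem funext_zmodTwo {ι : Type*} {v w : ι → ZMod 2} (h : ∀ i, v i ≠ 0 ↔ w i ≠ 0) :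
    v = w := by
  funext i
  have key : ∀ x y : ZMod 2, (x ≠ 0 ↔ y ≠ 0) → x = y := by decide
  exact key _ _ (h i)

theorem single_add_single_ne_zero_iff {ι : Type*} [DecidableEq ι] {i j : ι} (hij : i ≠ j)
    (k : ι) :
    (Pi.single i 1 + Pi.single j 1 : ι → ZMod 2) k ≠ 0 ↔ k = i ∨ k = j := by
  by_cases hki : k = i
  · subst hki
    simp [hij]
  · by_cases hkj : k = j
    · subst hkj
      simp [hki]
    · simp [hki, hkj]

variable {ι : Type*} [Fintype ι]

theorem natCast_hammingNorm_zmodTwo (v : ι → ZMod 2) :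
    (hammingNorm v : ZMod 2) = ∑ i, v i := by
  rw [hammingNorm, Finset.natCast_card_filter]
  refine Finset.sum_congr rfl fun i _ => ?_
  have key : ∀ x : ZMod 2, (if x ≠ 0 then 1 else 0) = x := by decide
  exact key (v i)

theorem even_hammingNorm_add {u v : ι → ZMod 2} (hu : Even (hammingNorm u))
    (hv : Even (hammingNorm v)) : Even (hammingNorm (u + v)) := by
  rw [← ZMod.natCast_eq_zero_iff_even, natCast_hammingNorm_zmodTwo] at *
  simp [Finset.sum_add_distrib, hu, hv]

variable [DecidableEq ι]

theorem hammingNorm_single_add_single {i j : ι} (hij : i ≠ j) :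
    hammingNorm (Pi.single i 1 + Pi.single j 1 : ι → ZMod 2) = 2 := by
  unfold hammingNorm
  convert Finset.card_pair hij
  ext k
  simp only [mem_filter, mem_univ, true_and, mem_insert, mem_singleton]
  exact single_add_single_ne_zero_iff hij k

theorem exists_eq_single_add_single_of_hammingNorm_eq_two {w : ι → ZMod 2}
    (hw : hammingNorm w = 2) : ∃ i j, i ≠ j ∧ w = Pi.single i 1 + Pi.single j 1 := by
  obtain ⟨i, j, hij, hsupp⟩ := Finset.card_eq_two.mp hw
  refine ⟨i, j, hij, funext_zmodTwo fun k => ?_⟩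
  rw [single_add_single_ne_zero_iff hij]
  simpa using congrArg (k ∈ ·) hsupp

theorem filter_offDiag_single_add_single_eq {i j : ι} (hij : i ≠ j) :
    {p ∈ (univ : Finset ι).offDiag | (Pi.single p.1 1 + Pi.single p.2 1 : ι → ZMod 2) =
      Pi.single i 1 + Pi.single j 1} = {(i, j), (j, i)} := by
  ext ⟨a, b⟩
  simp only [mem_filter, mem_offDiag, mem_univ, true_and, mem_insert, mem_singleton,
    Prod.mk.injEq]
  constructor
  · rintro ⟨hab, h⟩
    have supp (k : ι) : k = a ∨ k = b ↔ k = i ∨ k = j := by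
      rw [← single_add_single_ne_zero_iff hab, h, single_add_single_ne_zero_iff hij]
    have := supp a
    have := supp b
    have := supp i
    grind
  · rintro (⟨rfl, rfl⟩ | ⟨rfl, rfl⟩)
    · exact ⟨hij, rfl⟩
    · exact ⟨hij.symm, add_comm _ _⟩

theorem sum_sum_single_add_single {M : Type*} [AddCommMonoid M] (f : (ι → ZMod 2) → M) :
    ∑ i, ∑ j, f (Pi.single i 1 + Pi.single j 1) =
      Fintype.card ι • f 0 + 2 • ∑ w with hammingNorm w = 2, f w := by
  rw [← Finset.sum_product', ← Finset.diag_union_offDiag univ,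
    Finset.sum_union (Finset.disjoint_diag_offDiag _), Finset.sum_diag]
  congr 1
  · have hzero (i : ι) : (Pi.single i 1 + Pi.single i 1 : ι → ZMod 2) = 0 := by
      rw [← Pi.single_add, show (1 + 1 : ZMod 2) = 0 from rfl, Pi.single_zero]
    simp [hzero]
  · rw [← Finset.sum_fiberwise_of_maps_to (t := {w | hammingNorm w = 2})
      (g := fun p : ι × ι => (Pi.single p.1 1 + Pi.single p.2 1 : ι → ZMod 2)),
      Finset.smul_sum]
    · refine Finset.sum_congr rfl fun w hw => ?_
      obtain ⟨i, j, hij, rfl⟩ :=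
        exists_eq_single_add_single_of_hammingNorm_eq_two (mem_filter.mp hw).2
      rw [Finset.sum_eq_card_nsmul fun p hp => congrArg f (mem_filter.mp hp).2,
        filter_offDiag_single_add_single_eq hij, Finset.card_pair]
      simp [Prod.ext_iff, hij]
    · intro p hp
      simpa using hammingNorm_single_add_single (mem_offDiag.mp hp).2.2

end BinaryVectors

section Arithmetic

open Complex

theorem sum_prod_of_forall_eq_one_or_eq_neg_one {ι : Type*} [Fintype ι] {s : ι → ℂ}
    (hs : ∀ i, s i = 1 ∨ s i = -1) :
    ∑ i, s i = Fintype.card ι - 2 * #{i | s i = -1} ∧ ∏ i, s i = (-1) ^ #{i | s i = -1} := by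
  constructor
  · rw [Finset.natCast_card_filter, Finset.mul_sum, ← Finset.card_univ, Finset.cast_card,
      ← Finset.sum_sub_distrib]
    refine Finset.sum_congr rfl fun i _ => ?_
    rcases hs i with h | h <;> norm_num [h]
  · have hs' (i : ι) : s i = if s i = -1 then -1 else 1 := by
      rcases hs i with h | h <;> simp [h]
    rw [Finset.prod_congr rfl fun i _ => hs' i, Finset.prod_ite, Finset.prod_const,
      Finset.prod_const_one, mul_one]

theorem cexp_I_mul_pi_div_two_mul_intCast (m : ℤ) :
    cexp (I * ((Real.pi / 2 : ℝ) : ℂ) * m) = I ^ m := by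
  have h : I * ((Real.pi / 2 : ℝ) : ℂ) * m = m * (Real.pi / 2 * I) := by push_cast; ring
  rw [h, Complex.exp_int_mul, exp_pi_div_two_mul_I]

theorem I_zpow_two_mul_sq_sub (d k : ℕ) :
    I ^ (2 * ((d : ℤ) - k) ^ 2 - d) = I ^ d * (-1) ^ k := by
  obtain ⟨t, ht⟩ := Int.even_mul_pred_self ((d : ℤ) - k)
  have hexp : 2 * ((d : ℤ) - k) ^ 2 - d = d + 2 * k + 4 * (t - k) := by
    linear_combination 2 * ht
  rw [hexp, zpow_add₀ I_ne_zero, zpow_add₀ I_ne_zero, _root_.zpow_mul, _root_.zpow_mul]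
  norm_num

theorem cexp_pi_div_two_mul_of_sq_sum_eq {ι : Type*} [Fintype ι] {d : ℕ}
    (hcard : Fintype.card ι = 2 * d) {s : ι → ℂ} (hs : ∀ i, s i = 1 ∨ s i = -1) {μ : ℂ}
    (hμ : (∑ i, s i) ^ 2 = Fintype.card ι + 2 * μ) :
    cexp (I * ((Real.pi / 2 : ℝ) : ℂ) * μ) = I ^ d * ∏ i, s i := by
  obtain ⟨hsum, hprod⟩ := sum_prod_of_forall_eq_one_or_eq_neg_one hs
  set k := #{i | s i = -1}
  have hμ' : μ = ((2 * ((d : ℤ) - k) ^ 2 - d : ℤ) : ℂ) := by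
    rw [hsum, hcard] at hμ
    push_cast at hμ ⊢
    linear_combination -hμ / 2
  rw [hμ', cexp_I_mul_pi_div_two_mul_intCast, I_zpow_two_mul_sq_sub, hprod]

end Arithmetic

section Characters

variable {ι : Type*} [DecidableEq ι] (ψ : AddChar (ι → ZMod 2) ℂ)

theorem AddChar.apply_single_eq_one_or_eq_neg_one (i : ι) :
    ψ (Pi.single i 1) = 1 ∨ ψ (Pi.single i 1) = -1 := by
  rw [← mul_self_eq_one_iff, ← AddChar.map_add_eq_mul, ← Pi.single_add,
    show (1 + 1 : ZMod 2) = 0 from rfl, Pi.single_zero, AddChar.map_zero_eq_one]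

variable [Fintype ι]

theorem AddChar.apply_one_eq_prod : ψ 1 = ∏ i, ψ (Pi.single i 1) := by
  conv_lhs => rw [← Finset.univ_sum_single (1 : ι → ZMod 2)]
  exact ψ.map_sum_eq_prod _ _

theorem AddChar.sq_sum_apply_single :
    (∑ i, ψ (Pi.single i 1)) ^ 2 = Fintype.card ι + 2 * ∑ w with hammingNorm w = 2, ψ w := by
  simp_rw [sq, Finset.sum_mul_sum, ← AddChar.map_add_eq_mul, sum_sum_single_add_single,
    AddChar.map_zero_eq_one, nsmul_eq_mul, mul_one]
  norm_num

end Characters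

section HalvedCube

abbrev HalvedCubeVertex (d : ℕ) : Type :=
  {u : Fin (2 * d) → ZMod 2 // Even (Finset.univ.filter fun i => u i ≠ 0).card}

theorem halvedCube_adj {d : ℕ} {u v : HalvedCubeVertex d} :
    (halvedCube d).Adj u v ↔ hammingDist u.1 v.1 = 2 := by
  rw [halvedCube, SimpleGraph.fromRel_adj]
  change _ ∧ (hammingDist u.1 v.1 = 2 ∨ hammingDist v.1 u.1 = 2) ↔ _
  rw [hammingDist_comm v.1, or_self, and_iff_right_iff_imp]
  rintro h rfl
  simp at h

theorem halvedCube_adjMatrix_mulVec_addChar {d : ℕ} [DecidableRel (halvedCube d).Adj]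
    (ψ : AddChar (Fin (2 * d) → ZMod 2) ℂ) :
    (halvedCube d).adjMatrix ℂ *ᵥ (fun v : HalvedCubeVertex d => ψ v.1) =
      (∑ w with hammingNorm w = 2, ψ w) • fun v : HalvedCubeVertex d => ψ v.1 := by
  ext u
  have heven (v : Fin (2 * d) → ZMod 2) (hv : (if hammingDist u.1 v = 2 then ψ v else 0) ≠ 0) :
      Even (Finset.univ.filter fun i => v i ≠ 0).card := by
    rw [ne_eq, ite_eq_right_iff, not_forall, hammingDist_eq_hammingNorm] at hv
    have h := even_hammingNorm_add u.2 (hv.1 ▸ even_two)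
    rwa [add_neg_cancel_left] at h
  calc ((halvedCube d).adjMatrix ℂ *ᵥ fun v : HalvedCubeVertex d => ψ v.1) u
      = ∑ v : HalvedCubeVertex d, if hammingDist u.1 v.1 = 2 then ψ v.1 else 0 := by
        simp [mulVec, dotProduct, SimpleGraph.adjMatrix_apply, halvedCube_adj]
    _ = ∑ v, if hammingDist u.1 v = 2 then ψ v else 0 := by
        rw [← Finset.subtype_univ, Finset.sum_subtype_eq_sum_filter
          (fun v => if hammingDist u.1 v = 2 then ψ v else 0), Finset.sum_filter_of_ne]
        exact fun v _ => heven v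
    _ = ∑ w, if hammingNorm w = 2 then ψ (u.1 + w) else 0 :=
        (Fintype.sum_equiv (Equiv.addLeft u.1) _ _ fun w => by
          simp [hammingDist_eq_hammingNorm]).symm
    _ = _ := by
        simp [Finset.sum_filter, AddChar.map_add_eq_mul, Finset.mul_sum, mul_comm]

theorem transitionMatrix_halvedCube_mulVec_addChar (d : ℕ)
    (ψ : AddChar (Fin (2 * d) → ZMod 2) ℂ) :
    transitionMatrix (halvedCube d) (Real.pi / 2) *ᵥ (fun v : HalvedCubeVertex d => ψ v.1) =
      (Complex.I ^ d * ψ 1) • fun v : HalvedCubeVertex d => ψ v.1 := by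
  let _ := Classical.decRel (halvedCube d).Adj
  rw [transitionMatrix, Matrix.exp_mulVec_of_mulVec_eq_smul (by
    rw [smul_mulVec, halvedCube_adjMatrix_mulVec_addChar, smul_smul]),
    cexp_pi_div_two_mul_of_sq_sum_eq (Fintype.card_fin _) ψ.apply_single_eq_one_or_eq_neg_one
      ψ.sq_sum_apply_single, ψ.apply_one_eq_prod]

end HalvedCube

/-- For every `d ≥ 1`, the halved `2d`-cube admits perfect state
transfer at time `π/2` from each vertex `u` to the vertex `u + 𝟙`. -/
theorem stmt_13 (d : ℕ) (hd : 1 ≤ d) :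
    ∀ u : {u : Fin (2 * d) → ZMod 2 //
        Even (Finset.univ.filter fun i => u i ≠ 0).card},
      ∃ v : {u : Fin (2 * d) → ZMod 2 //
        Even (Finset.univ.filter fun i => u i ≠ 0).card},
        (∀ i, v.1 i = u.1 i + 1) ∧ HasPST (halvedCube d) u v (Real.pi / 2) := by
  intro u
  have hone : Even (hammingNorm (1 : Fin (2 * d) → ZMod 2)) := by
    simp [hammingNorm]
  refine ⟨⟨u.1 + 1, even_hammingNorm_add u.2 hone⟩, fun _ => rfl, ?_, Complex.I ^ d, ?_⟩
  · intro h
    have h0 := congrFun (congrArg Subtype.val h) ⟨0, by omega⟩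
    exact one_ne_zero (left_eq_add.mp h0)
  · refine Matrix.mulVec_single_of_mulVec_addChar _ _ 1
      (transitionMatrix_halvedCube_mulVec_addChar d) ?_
    funext i
    exact (CharTwo.sub_eq_add (u.1 i) 1).symm
end
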